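/- Let t = (x_A, x_D', x_C', x_B', x_A')₀ and t' = (x_D', x_C', x_B', x_A', x_D'')₀ be the tagged pentatopes assigned to the top pentatope of a prism and the bottom pentatope of the next prism over the same tetrahedron (vertices at three consecutive time levels). Then after one bisection, the child (x_A', z, x_B', x_C', x_D')₁ of t and the child (x_D', z', x_C', x_B', x_A')₁ of t' are reflected neighbors, where z, z' are the respective edge midpoints. -/

import Mathlib

/-- A tagged pentatope: an ordered 5-tuple of vertices together with a type γ ∈ {0,1,2,3}. -/
structure TP (V : Type*) where
  v : Fin 5 → V
  γ : Fin 4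

/-- The vertex permutation used in Stevenson's reflection, depending on the type. -/
def refPerm (γ : Fin 4) : Fin 5 → Fin 5 :=
  if γ = 0 then ![4, 3, 2, 1, 0]
  else if γ = 1 then ![4, 1, 3, 2, 0]
  else ![4, 1, 2, 3, 0]

/-- The reflection of a tagged pentatope. -/
def TP.reflect {V : Type*} (t : TP V) : TP V := ⟨t.v ∘ refPerm t.γ, t.γ⟩

variable {V : Type*} [AddCommGroup V] [Module ℝ V]

/-- The midpoint x' = (x₀ + x₄)/2 of the refinement edge. -/
noncomputable def TP.mid (t : TP V) : V := midpoint ℝ (t.v 0) (t.v 4)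

/-- First child of the bisection rule. -/
noncomputable def TP.child1 (t : TP V) : TP V :=
  ⟨![t.v 0, t.mid, t.v 1, t.v 2, t.v 3], t.γ + 1⟩

/-- Second child of the bisection rule. -/
noncomputable def TP.child2 (t : TP V) : TP V :=
  ⟨if t.γ = 0 then ![t.v 4, t.mid, t.v 3, t.v 2, t.v 1]
    else if t.γ = 1 then ![t.v 4, t.mid, t.v 1, t.v 3, t.v 2]
    else ![t.v 4, t.mid, t.v 1, t.v 2, t.v 3], t.γ + 1⟩

/-- Two vertex orderings agree in all but (at most) one position. -/
def agreeButOne {V : Type*} (u w : Fin 5 → V) : Prop :=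
  ∃ i : Fin 5, ∀ j : Fin 5, j ≠ i → u j = w j

/-- Reflected neighbors: same type, share a hyperface (four common vertices), and the
vertex order of t' matches that of t or of its reflection t_R in all but one
position. -/
def ReflNbr {V : Type*} (t t' : TP V) : Prop :=
  t.γ = t'.γ ∧ (Set.range t.v ∩ Set.range t'.v).encard = 4 ∧
    (agreeButOne t.v t'.v ∨ agreeButOne t.reflect.v t'.v)

/-- ψ_t : ℝ³ → ℝ⁴, appending the coordinate t. -/
def lift (t : ℝ) (x : Fin 3 → ℝ) : Fin 4 → ℝ := Fin.snoc x t

/-!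
Both children contain the four vertices `x_A', x_B', x_C', x_D'` of the tetrahedron lifted to
the middle time level, which are distinct because the tetrahedron is nondegenerate. Each
child has one further vertex, the midpoint of its refinement edge, and these midpoints lie at
the time levels `(r + s)/2` and `(s + u)/2`, off the middle level and different from each
other; so the two children share exactly a hyperface. Reflecting the type-1 child
`(x_A', z, x_B', x_C', x_D')₁` gives `(x_D', z, x_C', x_B', x_A')₁`, which differs from the
other child only in position 1.
-/

lemma lift_apply_last (τ : ℝ) (x : Fin 3 → ℝ) : lift τ x (Fin.last 3) = τ :=
  Fin.snoc_last (α := fun _ => ℝ) τ x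

lemma lift_injective (τ : ℝ) : Function.Injective (lift τ) := fun x y h =>
  funext fun i => by simpa [lift] using congrFun h i.castSucc

lemma lift_ne_of_ne {τ τ' : ℝ} (h : τ ≠ τ') (x y : Fin 3 → ℝ) : lift τ x ≠ lift τ' y :=
  fun he => h (by simpa only [lift_apply_last] using congrFun he (Fin.last 3))

lemma lift_notMem_image_lift {τ τ' : ℝ} (h : τ ≠ τ') (x : Fin 3 → ℝ) (X : Set (Fin 3 → ℝ)) :
    lift τ x ∉ lift τ' '' X := by
  rintro ⟨y, -, hy⟩
  exact lift_ne_of_ne h x y hy.symm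

lemma midpoint_lift (τ τ' : ℝ) (x : Fin 3 → ℝ) :
    midpoint ℝ (lift τ x) (lift τ' x) = lift ((τ + τ') / 2) x := by
  funext i
  rw [pi_midpoint_apply]
  refine Fin.lastCases ?_ (fun j => ?_) i
  · simp only [lift_apply_last, midpoint_eq_smul_add, smul_eq_mul, invOf_eq_inv]
    ring
  · simp [lift]

lemma encard_range_of_injective {α : Type*} {n : ℕ} {f : Fin n → α} (hf : f.Injective) :
    (Set.range f).encard = n := by
  rw [← Set.image_univ, hf.encard_image, Set.encard_univ, ENat.card_eq_coe_fintype_card,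
    Fintype.card_fin]

lemma reflNbr_of_shared_face {α : Type*} {x₀ x₁ x₂ x₃ m m' : α}
    (hface : ({x₀, x₁, x₂, x₃} : Set α).encard = 4)
    (hm : m ∉ (insert m' {x₀, x₁, x₂, x₃} : Set α))
    (hm' : m' ∉ ({x₀, x₁, x₂, x₃} : Set α)) :
    ReflNbr ⟨![x₀, m, x₁, x₂, x₃], 1⟩ ⟨![x₃, m', x₂, x₁, x₀], 1⟩ := by
  refine ⟨rfl, ?_, Or.inr ⟨1, fun j hj => ?_⟩⟩
  · have hrange : Set.range ![x₀, m, x₁, x₂, x₃] = insert m {x₀, x₁, x₂, x₃} := by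
      ext; simp only [Matrix.range_cons, Matrix.range_empty, Set.union_empty, Set.mem_union,
        Set.mem_singleton_iff, Set.mem_insert_iff]; tauto
    have hrange' : Set.range ![x₃, m', x₂, x₁, x₀] = insert m' {x₀, x₁, x₂, x₃} := by
      ext; simp only [Matrix.range_cons, Matrix.range_empty, Set.union_empty, Set.mem_union,
        Set.mem_singleton_iff, Set.mem_insert_iff]; tauto
    rw [hrange, hrange', Set.insert_inter_of_notMem hm, Set.inter_insert_of_notMem hm',
      Set.inter_self, hface]
  · fin_cases j <;> first | rfl | exact absurd rfl hj

theorem consecutive_slabs_children_reflected_neighbors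
    (a b c d : Fin 3 → ℝ) (hT : AffineIndependent ℝ ![a, b, c, d])
    (r s u : ℝ) (hrs : r < s) (hsu : s < u)
    (xA xA' xB' xC' xD' xD'' : Fin 4 → ℝ)
    (hA : xA = lift r a) (hA' : xA' = lift s a) (hB' : xB' = lift s b)
    (hC' : xC' = lift s c) (hD' : xD' = lift s d) (hD'' : xD'' = lift u d)
    (t t' : TP (Fin 4 → ℝ))
    (ht : t = ⟨![xA, xD', xC', xB', xA'], 0⟩)
    (ht' : t' = ⟨![xD', xC', xB', xA', xD''], 0⟩) :
    t.child2 = ⟨![xA', t.mid, xB', xC', xD'], 1⟩ ∧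
    t'.child1 = ⟨![xD', t'.mid, xC', xB', xA'], 1⟩ ∧
    ReflNbr t.child2 t'.child1 := by
  subst hA hA' hB' hC' hD' hD'' ht ht'
  refine ⟨rfl, rfl, ?_⟩
  have hface : ({lift s a, lift s b, lift s c, lift s d} : Set (Fin 4 → ℝ)) =
      lift s '' Set.range ![a, b, c, d] := by
    simp only [Matrix.range_cons, Matrix.range_empty, Set.union_empty, Set.singleton_union,
      Set.image_insert_eq, Set.image_singleton]
  refine reflNbr_of_shared_face ?_ ?_ ?_ <;>
    simp only [TP.mid, Matrix.cons_val, midpoint_lift, hface, Set.mem_insert_iff, not_or]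
  · rw [(lift_injective s).encard_image, encard_range_of_injective hT.injective]
    rfl
  · exact ⟨lift_ne_of_ne (by linarith) a d, lift_notMem_image_lift (by linarith) a _⟩
  · exact lift_notMem_image_lift (by linarith) d _
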